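/- arXiv:1008.5333 — 2 statements merged into one kernel-verified Lean document; each statement's English description precedes it below -/
import Mathlib

section
/- Let G be a finite group and W a finite-dimensional complex vector space carrying a representation of G. Then W admits a G-invariant quaternionic structure (a conjugate-linear map Q : W → W with Q∘Q = −id_W commuting with the action of every element of G) if and only if there exists a nondegenerate G-invariant alternating ℂ-bilinear form on W. -/
/-!
Average an inner product over `G` so that `ρ` acts unitarily.
Given `Q`, the form `⟪Q x, y⟫ - ⟪Q y, x⟫` is bilinear, alternating and invariant, and its value
at `(x, Q x)` is `‖Q x‖² + ‖x‖²`, so it is nondegenerate.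
Conversely, write `B x y = ⟪T x, y⟫` with `T` conjugate-linear and invariant. Skewness of `B` makes
`S = T²` self-adjoint with `⟪S x, x⟫ = -‖T x‖²`, so `S` is negative definite, and
`Q = T (-S)^(-1/2)` squares to `-1`; since `(-S)^(-1/2)` is a real polynomial in `S`, it commutes
with `T` and with `G`.
-/

/-- A quaternionic structure on a complex vector space: a conjugate-linear map squaring to `−id`. -/
def IsQuaternionicStructure {W : Type*} [AddCommGroup W] [Module ℂ W] (Q : W → W) : Prop :=
  (∀ x y : W, Q (x + y) = Q x + Q y) ∧
  (∀ (a : ℂ) (x : W), Q (a • x) = (starRingEnd ℂ a) • Q x) ∧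
  (∀ x : W, Q (Q x) = -x)

open scoped InnerProductSpace
open Polynomial Module

section Algebraic

variable {W : Type*} [AddCommGroup W] [Module ℂ W]

def IsQuaternionicStructure.toConjLinear {Q : W → W} (hQ : IsQuaternionicStructure Q) :
    W →ₗ⋆[ℂ] W where
  toFun := Q
  map_add' := hQ.1
  map_smul' := hQ.2.1

theorem LinearMap.isQuaternionicStructure {Q : W →ₗ⋆[ℂ] W} (hQ : ∀ x, Q (Q x) = -x) :
    IsQuaternionicStructure Q :=
  ⟨map_add Q, map_smulₛₗ Q, hQ⟩

theorem LinearMap.apply_comm_of_mem_adjoin (T : W →ₗ⋆[ℂ] W) {S R : End ℂ W}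
    (hR : R ∈ Algebra.adjoin ℝ {S}) (hTS : ∀ x, T (S x) = S (T x)) (x : W) :
    T (R x) = R (T x) := by
  induction hR using Algebra.adjoin_induction generalizing x with
  | mem R hR => rw [Set.mem_singleton_iff.1 hR, hTS]
  | algebraMap r =>
    simp only [Module.algebraMap_end_apply, ← Complex.coe_smul, map_smulₛₗ, Complex.conj_ofReal]
  | add R₁ R₂ _ _ h₁ h₂ => simp only [LinearMap.add_apply, map_add, h₁, h₂]
  | mul R₁ R₂ _ _ h₁ h₂ => simp only [End.mul_apply, h₁, h₂]

end Algebraic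

section InnerProductSpace

variable {W : Type*} [NormedAddCommGroup W] [InnerProductSpace ℂ W]

namespace LinearMap.IsSymmetric

variable [FiniteDimensional ℂ W] {S : W →ₗ[ℂ] W} (hS : S.IsSymmetric) {n : ℕ}
  (hn : finrank ℂ W = n)
include hS

theorem aeval_eq_zero_of_eval_eigenvalues {q : ℝ[X]}
    (hq : ∀ i, q.eval (hS.eigenvalues hn i) = 0) : aeval S q = 0 :=
  (hS.eigenvectorBasis hn).toBasis.ext fun i => by
    rw [OrthonormalBasis.coe_toBasis, ← aeval_map_algebraMap ℂ,
      End.aeval_apply_of_hasEigenvector (hS.hasEigenvector_eigenvectorBasis hn i),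
      eval_map_algebraMap, aeval_algebraMap_apply, coe_aeval_eq_eval, hq]
    simp

theorem eigenvalues_neg (hneg : ∀ x ≠ 0, (⟪S x, x⟫_ℂ).re < 0) (i : Fin n) :
    hS.eigenvalues hn i < 0 := by
  have := hneg _ (hS.hasEigenvector_eigenvectorBasis hn i).2
  rw [apply_eigenvectorBasis, inner_smul_left, inner_self_eq_norm_sq_to_K,
    (hS.eigenvectorBasis hn).orthonormal.1 i] at this
  simpa using this

theorem exists_mem_adjoin_mul_self_mul_eq_neg_one (hneg : ∀ x ≠ 0, (⟪S x, x⟫_ℂ).re < 0) :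
    ∃ R ∈ Algebra.adjoin ℝ {S}, R * R * S = -1 := by
  classical
  let μ := hS.eigenvalues rfl
  let p := Lagrange.interpolate (Finset.univ.image μ) _root_.id fun t : ℝ => (√(-t))⁻¹
  refine ⟨aeval S p, aeval_mem_adjoin_singleton ℝ S, ?_⟩
  have hp (i) : p.eval (μ i) = (√(-μ i))⁻¹ :=
    Lagrange.eval_interpolate_at_node _ (Set.injOn_id _)
      (Finset.mem_image_of_mem μ (Finset.mem_univ i))
  have := hS.aeval_eq_zero_of_eval_eigenvalues rfl (q := p * p * X + 1) fun i => by
    have hμ : 0 < -μ i := neg_pos.2 (hS.eigenvalues_neg rfl hneg i)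
    change eval (μ i) (p * p * X + 1) = 0
    simp only [eval_add, eval_mul, eval_X, eval_one, hp]
    field_simp
    rw [Real.sq_sqrt hμ.le]
    ring
  simpa [eq_neg_iff_add_eq_zero] using this

end LinearMap.IsSymmetric

theorem exists_conjLinear_sq_eq_neg_of_skew [FiniteDimensional ℂ W] (T : W →ₗ⋆[ℂ] W)
    (hskew : ∀ x y, ⟪T x, y⟫_ℂ = -⟪T y, x⟫_ℂ) (hT : Function.Injective T) :
    ∃ Q : W →ₗ⋆[ℂ] W, (∀ x, Q (Q x) = -x) ∧
      ∀ L : End ℂ W, (∀ x, L (T x) = T (L x)) → ∀ x, L (Q x) = Q (L x) := by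
  let S : End ℂ W := T ∘ₛₗ T
  have hS_inner (x y : W) : ⟪S x, y⟫_ℂ = -⟪T y, T x⟫_ℂ := hskew (T x) y
  have hS : S.IsSymmetric := fun x y => by
    rw [hS_inner, ← inner_conj_symm x, hS_inner, map_neg, inner_conj_symm]
  have hneg (x : W) (hx : x ≠ 0) : (⟪S x, x⟫_ℂ).re < 0 := by
    have : T x ≠ 0 := (map_ne_zero_iff T hT).2 hx
    rw [hS_inner, Complex.neg_re, neg_lt_zero]
    exact re_inner_self_pos (𝕜 := ℂ) |>.2 this
  obtain ⟨R, hR, hRRS⟩ := hS.exists_mem_adjoin_mul_self_mul_eq_neg_one hneg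
  have hTR := T.apply_comm_of_mem_adjoin hR fun x => rfl
  refine ⟨T ∘ₛₗ R, fun x => ?_, fun L hL x => ?_⟩
  · have hSR : Commute S R := Algebra.commute_of_mem_adjoin_self hR
    calc T (R (T (R x))) = R (S (R x)) := by rw [hTR]; rfl
      _ = (R * R * S) x := by rw [mul_assoc, ← hSR.eq]; rfl
      _ = -x := by rw [hRRS]; rfl
  · have hLS : Commute L S := LinearMap.ext fun x => by simp [S, hL]
    have hLR := Algebra.commute_of_mem_adjoin_singleton_of_commute hR hLS
    simp only [LinearMap.coe_comp, Function.comp_apply, hL, ← End.mul_apply, hLR.eq]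

section AltForm

variable (Q : W →ₗ⋆[ℂ] W)

noncomputable def altFormOfConjLinear : LinearMap.BilinForm ℂ W :=
  innerₛₗ ℂ ∘ₛₗ Q - (innerₛₗ ℂ ∘ₛₗ Q).flip

@[simp]
theorem altFormOfConjLinear_apply (x y : W) :
    altFormOfConjLinear Q x y = ⟪Q x, y⟫_ℂ - ⟪Q y, x⟫_ℂ :=
  rfl

theorem isAlt_altFormOfConjLinear : (altFormOfConjLinear Q).IsAlt :=
  fun _ => sub_self _

theorem altFormOfConjLinear_apply_apply {L : W →ₗ[ℂ] W} (hL : ∀ x y, ⟪L x, L y⟫_ℂ = ⟪x, y⟫_ℂ)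
    (hQL : ∀ x, Q (L x) = L (Q x)) (x y : W) :
    altFormOfConjLinear Q (L x) (L y) = altFormOfConjLinear Q x y := by
  simp only [altFormOfConjLinear_apply, hQL, hL]

theorem separatingLeft_altFormOfConjLinear (hQ : ∀ x, Q (Q x) = -x) :
    (altFormOfConjLinear Q).SeparatingLeft := by
  intro x hx
  have h := congrArg RCLike.re (hx (Q x))
  rw [altFormOfConjLinear_apply, hQ, inner_neg_left, sub_neg_eq_add, map_add,
    inner_self_eq_norm_sq, inner_self_eq_norm_sq, map_zero] at h
  exact norm_eq_zero.1 (by nlinarith [norm_nonneg (Q x), norm_nonneg x])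

end AltForm

section Riesz

variable [FiniteDimensional ℂ W] (B : LinearMap.BilinForm ℂ W)

noncomputable def conjLinearOfBilin : W →ₗ⋆[ℂ] W :=
  (InnerProductSpace.toDual ℂ W).symm.toLinearEquiv.toLinearMap ∘ₛₗ
    (LinearMap.toContinuousLinearMap.toLinearMap ∘ₗ B)

@[simp]
theorem inner_conjLinearOfBilin_apply (x y : W) : ⟪conjLinearOfBilin B x, y⟫_ℂ = B x y := by
  simp [conjLinearOfBilin]

variable {B}

theorem inner_conjLinearOfBilin_eq_neg (hB : B.IsAlt) (x y : W) :
    ⟪conjLinearOfBilin B x, y⟫_ℂ = -⟪conjLinearOfBilin B y, x⟫_ℂ := by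
  rw [inner_conjLinearOfBilin_apply, inner_conjLinearOfBilin_apply, hB.neg_eq]

theorem conjLinearOfBilin_injective (hB : B.SeparatingLeft) :
    Function.Injective (conjLinearOfBilin B) :=
  (injective_iff_map_eq_zero _).2 fun x hx => hB x fun y => by
    rw [← inner_conjLinearOfBilin_apply, hx, inner_zero_left]

theorem conjLinearOfBilin_apply_comm {G : Type*} [Group G] {ρ : Representation ℂ G W}
    (hρ : ∀ s x y, ⟪ρ s x, ρ s y⟫_ℂ = ⟪x, y⟫_ℂ) (hB : ∀ s x y, B (ρ s x) (ρ s y) = B x y)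
    (s : G) (x : W) : ρ s (conjLinearOfBilin B x) = conjLinearOfBilin B (ρ s x) := by
  refine ext_inner_right ℂ fun y => ?_
  rw [← ρ.self_inv_apply s y, hρ, inner_conjLinearOfBilin_apply, inner_conjLinearOfBilin_apply, hB]

end Riesz

end InnerProductSpace

namespace Representation

variable {G W E : Type*} [AddCommGroup W] [Module ℂ W] [NormedAddCommGroup E]
  [InnerProductSpace ℂ E]

section Monoid

variable [Monoid G] (ρ : Representation ℂ G W) (e : W →ₗ[ℂ] E)

def orbitMap : W →ₗ[ℂ] PiLp 2 fun _ : G => E :=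
  (WithLp.linearEquiv 2 ℂ (G → E)).symm.toLinearMap ∘ₗ LinearMap.pi fun s => e ∘ₗ ρ s

@[simp]
theorem orbitMap_apply (x : W) (s : G) : ρ.orbitMap e x s = e (ρ s x) :=
  rfl

theorem orbitMap_injective {e : W →ₗ[ℂ] E} (he : Function.Injective e) :
    Function.Injective (ρ.orbitMap e) :=
  fun x y h => by simpa using he (congrArg (· 1) h)

end Monoid

theorem inner_orbitMap_apply_apply [Group G] [Fintype G] (ρ : Representation ℂ G W)
    (e : W →ₗ[ℂ] E) (t : G) (x y : W) :
    ⟪ρ.orbitMap e (ρ t x), ρ.orbitMap e (ρ t y)⟫_ℂ = ⟪ρ.orbitMap e x, ρ.orbitMap e y⟫_ℂ := by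
  simp only [PiLp.inner_apply, orbitMap_apply, ← End.mul_apply, ← map_mul]
  exact Fintype.sum_equiv (Equiv.mulRight t) _ _ fun s => rfl

end Representation

/-- A finite-dimensional complex representation of a finite group `G` admits a
`G`-invariant quaternionic structure iff it admits a nondegenerate `G`-invariant alternating
bilinear form. -/
theorem invariant_quaternionic_structure_iff_nondeg_invariant_alt_form
    {G : Type*} [Group G] [Finite G]
    {W : Type*} [AddCommGroup W] [Module ℂ W] [FiniteDimensional ℂ W]
    (ρ : Representation ℂ G W) :
    (∃ Q : W → W, IsQuaternionicStructure Q ∧ ∀ (s : G) (x : W), Q (ρ s x) = ρ s (Q x)) ↔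
      (∃ B : LinearMap.BilinForm ℂ W,
        (∀ x : W, B x x = 0) ∧
        (∀ (s : G) (x y : W), B (ρ s x) (ρ s y) = B x y) ∧
        (∀ x : W, (∀ y : W, B x y = 0) → x = 0)) := by
  have := Fintype.ofFinite G
  let e : W ≃ₗ[ℂ] EuclideanSpace ℂ (Fin (finrank ℂ W)) :=
    (finBasis ℂ W).equivFun.trans (WithLp.linearEquiv 2 ℂ _).symm
  let _ : NormedAddCommGroup W := NormedAddCommGroup.induced W _ (ρ.orbitMap e.toLinearMap)
    (ρ.orbitMap_injective (e := e.toLinearMap) e.injective)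
  let _ : InnerProductSpace ℂ W := InnerProductSpace.induced (ρ.orbitMap e.toLinearMap)
  have hρ : ∀ s x y, ⟪ρ s x, ρ s y⟫_ℂ = ⟪x, y⟫_ℂ := ρ.inner_orbitMap_apply_apply e.toLinearMap
  constructor
  · rintro ⟨Q, hQ, hQρ⟩
    exact ⟨altFormOfConjLinear hQ.toConjLinear, isAlt_altFormOfConjLinear _,
      fun s => altFormOfConjLinear_apply_apply _ (hρ s) (hQρ s),
      separatingLeft_altFormOfConjLinear _ hQ.2.2⟩
  · rintro ⟨B, hBalt, hBρ, hBsep⟩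
    obtain ⟨Q, hQ, hQcomm⟩ := exists_conjLinear_sq_eq_neg_of_skew (conjLinearOfBilin B)
      (inner_conjLinearOfBilin_eq_neg hBalt) (conjLinearOfBilin_injective hBsep)
    exact ⟨Q, LinearMap.isQuaternionicStructure hQ, fun s x =>
      (hQcomm (ρ s) (conjLinearOfBilin_apply_comm hρ hBρ s) x).symm⟩
end

section
/- Let G be a finite group, W a finite-dimensional complex vector space carrying a representation of G, and h a G-invariant Hermitian inner product on W (positive definite, ℂ-linear in the first variable and conjugate-linear in the second). If W admits a G-invariant real structure, then there exists a G-invariant real structure R on W such that h(Rx, Ry) = h(y, x) for all x, y ∈ W. -/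
def IsRealStructure {W : Type*} [AddCommGroup W] [Module ℂ W] (R : W → W) : Prop :=
  (∀ x y : W, R (x + y) = R x + R y) ∧
  (∀ (a : ℂ) (x : W), R (a • x) = (starRingEnd ℂ a) • R x) ∧
  (∀ x : W, R (R x) = x)

/-!
Let `R₀` be an invariant real structure and `T = R₀†R₀` the positive operator with
`⟪T x, y⟫ = ⟪R₀ y, R₀ x⟫`. It commutes with the unitary group action, and `T R₀ T = R₀`, so the
conjugate-linear `R₀` maps the `μ`-eigenspace of `T` onto its `μ⁻¹`-eigenspace. Hence `S = √T`
also satisfies `S R₀ S = R₀`, so `R = S R₀` is again an invariant real structure, and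
`⟪R x, R y⟫ = ⟪S² R₀ x, R₀ y⟫ = ⟪T R₀ x, R₀ y⟫ = ⟪y, x⟫`.
-/

open InnerProductSpace
open scoped InnerProductSpace

namespace LinearMap.IsSymmetric

variable {𝕜 E : Type*} [RCLike 𝕜] [NormedAddCommGroup E] [InnerProductSpace 𝕜 E]
  [FiniteDimensional 𝕜 E] {T : E →ₗ[𝕜] E}

theorem ext_of_eigenvectors (hT : T.IsSymmetric) {S M : Type*} [Semiring S] [AddCommMonoid M]
    [Module S M] {σ : 𝕜 →+* S} {f g : E →ₛₗ[σ] M}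
    (hfg : ∀ (μ : ℝ) (x : E), T x = (μ : 𝕜) • x → f x = g x) : f = g :=
  (hT.eigenvectorBasis rfl).toBasis.ext fun i =>
    hfg (hT.eigenvalues rfl i) _ (hT.apply_eigenvectorBasis rfl i)

variable (hT : T.IsSymmetric)

noncomputable def funCalc (f : ℝ → ℝ) : E →ₗ[𝕜] E :=
  (hT.eigenvectorBasis rfl).toBasis.constr 𝕜
    fun i => (f (hT.eigenvalues rfl i) : 𝕜) • hT.eigenvectorBasis rfl i

theorem funCalc_apply (f : ℝ → ℝ) (x : E) :
    hT.funCalc f x = ∑ i, ((f (hT.eigenvalues rfl i) : 𝕜) * ⟪hT.eigenvectorBasis rfl i, x⟫_𝕜) •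
      hT.eigenvectorBasis rfl i := by
  simp [funCalc, smul_smul, OrthonormalBasis.repr_apply_apply, mul_comm]

theorem isSymmetric_funCalc (f : ℝ → ℝ) : (hT.funCalc f).IsSymmetric := by
  intro x y
  simp only [funCalc_apply, sum_inner, inner_sum, inner_smul_left, inner_smul_right, map_mul,
    RCLike.conj_ofReal]
  refine Finset.sum_congr rfl fun i _ => ?_
  rw [inner_conj_symm]
  ring

theorem funCalc_apply_of_eigenvector (f : ℝ → ℝ) {μ : ℝ} {x : E} (hx : T x = (μ : 𝕜) • x) :
    hT.funCalc f x = (f μ : 𝕜) • x := by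
  set b := hT.eigenvectorBasis rfl
  rw [funCalc_apply]
  conv_rhs => rw [← b.sum_repr' x, Finset.smul_sum]
  refine Finset.sum_congr rfl fun i _ => ?_
  have hcoeff : ((hT.eigenvalues rfl i : 𝕜) - μ) * ⟪b i, x⟫_𝕜 = 0 := by
    rw [sub_mul, sub_eq_zero]
    calc (hT.eigenvalues rfl i : 𝕜) * ⟪b i, x⟫_𝕜 = ⟪T (b i), x⟫_𝕜 := by
          rw [hT.apply_eigenvectorBasis, inner_smul_left, RCLike.conj_ofReal]
      _ = ⟪b i, T x⟫_𝕜 := hT _ _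
      _ = μ * ⟪b i, x⟫_𝕜 := by rw [hx, inner_smul_right]
  rcases mul_eq_zero.1 hcoeff with hμ | hx0
  · rw [sub_eq_zero, RCLike.ofReal_inj] at hμ
    rw [hμ, smul_smul]
  · rw [hx0, mul_zero, zero_smul, smul_zero]

theorem commute_funCalc {U : Module.End 𝕜 E} (hU : Commute T U) (f : ℝ → ℝ) :
    Commute (hT.funCalc f) U :=
  hT.ext_of_eigenvectors fun μ x hx => by
    have hUx : T (U x) = (μ : 𝕜) • U x := by
      rw [← Module.End.mul_apply, hU.eq, Module.End.mul_apply, hx, map_smul]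
    rw [Module.End.mul_apply, Module.End.mul_apply, hT.funCalc_apply_of_eigenvector f hUx,
      hT.funCalc_apply_of_eigenvector f hx, map_smul]

end LinearMap.IsSymmetric

section AntiunitaryInvolution

variable {𝕜 E : Type*} [RCLike 𝕜] [NormedAddCommGroup E] [InnerProductSpace 𝕜 E]
  [FiniteDimensional 𝕜 E] (R : E →ₗ⋆[𝕜] E)

/-- `R†R`, for the conjugate-linear adjoint `R†` of `R`. -/
noncomputable def gramOperator : E →ₗ[𝕜] E :=
  haveI := FiniteDimensional.complete 𝕜 E
  { toFun x := (toDual 𝕜 E).symm (((innerₛₗ 𝕜).flip (R x)).comp R).toContinuousLinearMap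
    map_add' x y := ext_inner_right 𝕜 fun z => by simp [inner_add_left]
    map_smul' c x := ext_inner_right 𝕜 fun z => by simp [inner_smul_left] }

theorem inner_gramOperator_left (x y : E) : ⟪gramOperator R x, y⟫_𝕜 = ⟪R y, R x⟫_𝕜 := by
  simp [gramOperator]

theorem isSymmetric_gramOperator : (gramOperator R).IsSymmetric := fun x y => by
  rw [inner_gramOperator_left, ← inner_conj_symm x, inner_gramOperator_left, inner_conj_symm]

variable {R}

theorem gramOperator_eigenvalue_pos (hR : Function.Injective R) {μ : ℝ} {x : E} (hx0 : x ≠ 0)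
    (hx : gramOperator R x = (μ : 𝕜) • x) : 0 < μ := by
  have hRx : R x ≠ 0 := (map_ne_zero_iff R hR).2 hx0
  have h : μ * ‖x‖ ^ 2 = ‖R x‖ ^ 2 := by
    have := congrArg RCLike.re (inner_gramOperator_left R x x)
    rwa [hx, inner_smul_left, RCLike.conj_ofReal, inner_self_eq_norm_sq_to_K,
      inner_self_eq_norm_sq_to_K, ← RCLike.ofReal_pow, ← RCLike.ofReal_pow, ← RCLike.ofReal_mul,
      RCLike.ofReal_re, RCLike.ofReal_re] at this
  have hpos : 0 < μ * ‖x‖ ^ 2 := h ▸ pow_pos (norm_pos_iff.2 hRx) 2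
  exact pos_of_mul_pos_left hpos (by positivity)

theorem gramOperator_apply_apply_gramOperator (hR : Function.Involutive R) (x : E) :
    gramOperator R (R (gramOperator R x)) = R x :=
  ext_inner_right 𝕜 fun y => by
    rw [inner_gramOperator_left, hR, ← inner_conj_symm, inner_gramOperator_left, hR,
      inner_conj_symm]

theorem gramOperator_apply_apply_of_eigenvector (hR : Function.Involutive R) {μ : ℝ} (hμ : μ ≠ 0)
    {x : E} (hx : gramOperator R x = (μ : 𝕜) • x) :
    gramOperator R (R x) = ((μ⁻¹ : ℝ) : 𝕜) • R x := by
  have h := gramOperator_apply_apply_gramOperator hR x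
  rw [hx, map_smulₛₗ, RCLike.conj_ofReal, map_smul] at h
  rwa [RCLike.ofReal_inv, eq_inv_smul_iff₀ (RCLike.ofReal_ne_zero.2 hμ)]

theorem commute_gramOperator {U : Module.End 𝕜 E} (hU : Function.Surjective U)
    (hUinner : ∀ x y, ⟪U x, U y⟫_𝕜 = ⟪x, y⟫_𝕜) (hRU : ∀ x, R (U x) = U (R x)) :
    Commute (gramOperator R) U :=
  LinearMap.ext fun x => ext_inner_right 𝕜 fun y => by
    obtain ⟨z, rfl⟩ := hU y
    rw [Module.End.mul_apply, Module.End.mul_apply, inner_gramOperator_left, hRU, hRU, hUinner,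
      hUinner, inner_gramOperator_left]

variable (R) in
noncomputable def gramSqrt : E →ₗ[𝕜] E := (isSymmetric_gramOperator R).funCalc Real.sqrt

theorem gramSqrt_apply_of_eigenvector {μ : ℝ} {x : E} (hx : gramOperator R x = (μ : 𝕜) • x) :
    gramSqrt R x = (√μ : 𝕜) • x :=
  (isSymmetric_gramOperator R).funCalc_apply_of_eigenvector _ hx

theorem commute_gramSqrt {U : Module.End 𝕜 E} (hU : Function.Surjective U)
    (hUinner : ∀ x y, ⟪U x, U y⟫_𝕜 = ⟪x, y⟫_𝕜) (hRU : ∀ x, R (U x) = U (R x)) :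
    Commute (gramSqrt R) U :=
  (isSymmetric_gramOperator R).commute_funCalc (commute_gramOperator hU hUinner hRU) _

theorem gramSqrt_mul_self (hR : Function.Injective R) :
    gramSqrt R * gramSqrt R = gramOperator R :=
  (isSymmetric_gramOperator R).ext_of_eigenvectors fun μ x hx => by
    rcases eq_or_ne x 0 with rfl | hx0
    · simp
    have hμ := gramOperator_eigenvalue_pos hR hx0 hx
    rw [Module.End.mul_apply, gramSqrt_apply_of_eigenvector hx, map_smul,
      gramSqrt_apply_of_eigenvector hx, smul_smul, ← RCLike.ofReal_mul, Real.mul_self_sqrt hμ.le,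
      hx]

theorem gramSqrt_comp_comp_gramSqrt (hR : Function.Involutive R) :
    gramSqrt R ∘ₛₗ R ∘ₛₗ gramSqrt R = R :=
  (isSymmetric_gramOperator R).ext_of_eigenvectors fun μ x hx => by
    rcases eq_or_ne x 0 with rfl | hx0
    · simp
    have hμ := gramOperator_eigenvalue_pos hR.injective hx0 hx
    have hRx := gramOperator_apply_apply_of_eigenvector hR hμ.ne' hx
    rw [LinearMap.comp_apply, LinearMap.comp_apply, gramSqrt_apply_of_eigenvector hx, map_smulₛₗ,
      RCLike.conj_ofReal, map_smul, gramSqrt_apply_of_eigenvector hRx, smul_smul,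
      ← RCLike.ofReal_mul, Real.sqrt_inv, mul_inv_cancel₀ (Real.sqrt_pos.2 hμ).ne',
      RCLike.ofReal_one, one_smul]

theorem exists_antiunitary_involution_commuting {R : E →ₗ⋆[𝕜] E} (hR : Function.Involutive R) :
    ∃ J : E →ₗ⋆[𝕜] E, Function.Involutive J ∧ (∀ x y, ⟪J x, J y⟫_𝕜 = ⟪y, x⟫_𝕜) ∧
      ∀ U : Module.End 𝕜 E, Function.Surjective U → (∀ x y, ⟪U x, U y⟫_𝕜 = ⟪x, y⟫_𝕜) →
        (∀ x, R (U x) = U (R x)) → ∀ x, J (U x) = U (J x) := by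
  refine ⟨gramSqrt R ∘ₛₗ R, fun x => ?_, fun x y => ?_, fun U hU hUinner hRU x => ?_⟩
  · have := LinearMap.congr_fun (gramSqrt_comp_comp_gramSqrt hR) (R x)
    simpa [hR x] using this
  · calc ⟪gramSqrt R (R x), gramSqrt R (R y)⟫_𝕜
        = ⟪(gramSqrt R * gramSqrt R) (R x), R y⟫_𝕜 :=
          ((isSymmetric_gramOperator R).isSymmetric_funCalc _ _ _).symm
      _ = ⟪y, x⟫_𝕜 := by rw [gramSqrt_mul_self hR.injective, inner_gramOperator_left, hR, hR]
  · rw [LinearMap.comp_apply, hRU, ← Module.End.mul_apply, (commute_gramSqrt hU hUinner hRU).eq]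
    rfl

end AntiunitaryInvolution

theorem exists_invariant_real_structure_compatible_with_hermitian_general
    {G : Type*} [Group G]
    {W : Type*} [AddCommGroup W] [Module ℂ W] [FiniteDimensional ℂ W]
    (ρ : Representation ℂ G W)
    (h : W → W → ℂ)
    (hadd₂ : ∀ x y z : W, h x (y + z) = h x y + h x z)
    (hsmul₂ : ∀ (a : ℂ) (x y : W), h x (a • y) = (starRingEnd ℂ a) * h x y)
    (hherm : ∀ x y : W, h y x = starRingEnd ℂ (h x y))
    (hposdef : ∀ x : W, x ≠ 0 → 0 < (h x x).re)
    (hinv : ∀ (s : G) (x y : W), h (ρ s x) (ρ s y) = h x y)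
    (hreal : ∃ R₀ : W → W, IsRealStructure R₀ ∧ ∀ (s : G) (x : W), R₀ (ρ s x) = ρ s (R₀ x)) :
    ∃ R : W → W, IsRealStructure R ∧ (∀ (s : G) (x : W), R (ρ s x) = ρ s (R x)) ∧
      ∀ x y : W, h (R x) (R y) = h y x := by
  obtain ⟨R₀, ⟨hR₀add, hR₀smul, hR₀inv⟩, hR₀ρ⟩ := hreal
  have h_zero : ∀ x, h x 0 = 0 := fun x => by simpa using hadd₂ x 0 0
  -- Mathlib's inner product is conjugate-linear in its first argument, `h` in its second.
  let core : InnerProductSpace.Core ℂ W :=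
    { inner x y := h y x
      conj_inner_symm x y := (hherm x y).symm
      re_inner_nonneg x := by
        rcases eq_or_ne x 0 with rfl | hx
        · simp [h_zero]
        · exact (hposdef x hx).le
      add_left x y z := hadd₂ z x y
      smul_left x y r := hsmul₂ r y x
      definite x hx := by_contra fun hx0 => by simpa [hx] using hposdef x hx0 }
  let _ : NormedAddCommGroup W := core.toNormedAddCommGroup
  let _ : InnerProductSpace ℂ W := .ofCore core.toCore
  let R : W →ₗ⋆[ℂ] W := { toFun := R₀, map_add' := hR₀add, map_smul' := hR₀smul }
  obtain ⟨J, hJ, hJinner, hJcomm⟩ := exists_antiunitary_involution_commuting (R := R) hR₀inv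
  exact ⟨J, ⟨J.map_add, J.map_smulₛₗ, hJ⟩,
    fun s => hJcomm (ρ s) (fun x => ⟨ρ s⁻¹ x, ρ.self_inv_apply s x⟩) (fun x y => hinv s y x)
      (hR₀ρ s),
    fun x y => hJinner y x⟩

/-- Let `W` be a finite-dimensional complex representation of a finite group
`G` and `h` a `G`-invariant Hermitian inner product on `W` (ℂ-linear in the first variable,
conjugate-linear in the second, positive definite).  If `W` admits a `G`-invariant real structure
then it admits one, `R`, satisfying moreover `h(Rx, Ry) = h(y, x)` for all `x, y`. -/
theorem exists_invariant_real_structure_compatible_with_hermitian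
    {G : Type*} [Group G] [Finite G]
    {W : Type*} [AddCommGroup W] [Module ℂ W] [FiniteDimensional ℂ W]
    (ρ : Representation ℂ G W)
    (h : W → W → ℂ)
    (hadd₁ : ∀ x y z : W, h (x + y) z = h x z + h y z)
    (hsmul₁ : ∀ (a : ℂ) (x y : W), h (a • x) y = a * h x y)
    (hadd₂ : ∀ x y z : W, h x (y + z) = h x y + h x z)
    (hsmul₂ : ∀ (a : ℂ) (x y : W), h x (a • y) = (starRingEnd ℂ a) * h x y)
    (hherm : ∀ x y : W, h y x = starRingEnd ℂ (h x y))
    (hposdef : ∀ x : W, x ≠ 0 → 0 < (h x x).re)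
    (hinv : ∀ (s : G) (x y : W), h (ρ s x) (ρ s y) = h x y)
    (hreal : ∃ R₀ : W → W, IsRealStructure R₀ ∧ ∀ (s : G) (x : W), R₀ (ρ s x) = ρ s (R₀ x)) :
    ∃ R : W → W, IsRealStructure R ∧ (∀ (s : G) (x : W), R (ρ s x) = ρ s (R x)) ∧
      ∀ x y : W, h (R x) (R y) = h y x :=
  exists_invariant_real_structure_compatible_with_hermitian_general ρ h hadd₂ hsmul₂ hherm hposdef
    hinv hreal
end
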